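/- arXiv:1701.03373 — 3 statements merged into one kernel-verified Lean document; each statement's English description precedes it below -/
import Mathlib

section
/- Let R be a commutative ring, A a commutative R-algebra, and let V, W : A → A be R-derivations of A. For any elements f, g, h ∈ A with W(h) = 0, the following identity of derivations holds: [f·h·V, g·W] − [f·V, g·h·W] = −f·g·V(h)·W, where [·,·] denotes the commutator of derivations and a·D denotes the derivation x ↦ a·D(x). -/
/-- The Kaliman–Kutzschebauch formula: for `R`-derivations `V, W` of a commutative
`R`-algebra `A` and elements `f, g, h ∈ A` with `W h = 0`, one has
`[f·h·V, g·W] − [f·V, g·h·W] = −f·g·V(h)·W`. -/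
theorem kaliman_kutzschebauch_formula
    (R A : Type*) [CommRing R] [CommRing A] [Algebra R A]
    (V W : Derivation R A A) (f g h : A) (hWh : W h = 0) :
    ⁅(f * h) • V, g • W⁆ - ⁅f • V, (g * h) • W⁆ = -((f * g * V h) • W) := by
  ext x
  simp only [Derivation.commutator_apply, Derivation.sub_apply, Derivation.smul_apply, Derivation.neg_apply, smul_eq_mul, Derivation.leibniz, hWh, mul_zero, zero_add, add_zero, zero_mul, smul_add, smul_zero]
  ring
end

section
/- Let λ ∈ ℂ and let M be the ℂ-linear span of the monomials z₀^{j₀}·(z₁−λ)^{j₁} with j₀, j₁ ∈ ℕ₀, considered inside the Laurent polynomial ring ℂ[z₀, z₀⁻¹, z₁]. Then the only ideal of ℂ[z₀, z₀⁻¹, z₁] contained in M is the zero ideal. -/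
/-!
Write `z₀ = T 1` and `z₁ = X`. Every element of `M` is a polynomial in `z₁` whose coefficients
are honest polynomials in `z₀`, i.e. lie in the range of `toLaurent`. An ideal is stable under
multiplication by `z₀⁻ⁿ`, and shifting a nonzero coefficient far enough produces a negative power
of `z₀`, so a nonzero ideal cannot lie in `M`.
-/

open Polynomial

section

open scoped LaurentPolynomial

namespace LaurentPolynomial

variable {R : Type*} [Semiring R]

theorem coeff_eq_zero_of_mem_range_toLaurent {f : R[T;T⁻¹]} (hf : f ∈ Set.range toLaurent)
    {n : ℤ} (hn : n < 0) : f.coeff n = 0 := by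
  obtain ⟨g, rfl⟩ := hf
  rw [← Finsupp.notMem_support_iff, support_coeff_toLaurent]
  simp only [Finset.mem_map, Nat.castEmbedding_apply, not_exists, not_and]
  omega

theorem coeff_T_mul (f : R[T;T⁻¹]) (n m : ℤ) : (T n * f).coeff (n + m) = f.coeff m := by
  rw [T, AddMonoidAlgebra.coeff_single_mul_apply, one_mul, neg_add_cancel_left]

theorem eq_zero_of_forall_T_mul_mem_range_toLaurent {f : R[T;T⁻¹]}
    (h : ∀ n : ℤ, T n * f ∈ Set.range toLaurent) : f = 0 := by
  ext m
  rw [← coeff_T_mul f (-1 - m)]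
  exact coeff_eq_zero_of_mem_range_toLaurent (h _) (by omega)

end LaurentPolynomial

namespace Polynomial

open LaurentPolynomial (T eq_zero_of_forall_T_mul_mem_range_toLaurent)

theorem eq_zero_of_forall_C_T_mul_mem_lifts_toLaurent {R : Type*} [Semiring R]
    {p : R[T;T⁻¹][X]} (h : ∀ n : ℤ, C (T n) * p ∈ lifts (toLaurent : R[X] →+* R[T;T⁻¹])) :
    p = 0 := by
  refine Polynomial.ext fun k => ?_
  rw [coeff_zero]
  refine eq_zero_of_forall_T_mul_mem_range_toLaurent fun n => ?_
  simpa only [coeff_C_mul] using (lifts_iff_coeff_lifts _).mp (h n) k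

theorem mem_lifts_toLaurent_of_mem_span_monomials {R : Type*} [CommRing R] (lam : R)
    {p : R[T;T⁻¹][X]}
    (hp : p ∈ Submodule.span R
      {p | ∃ j₀ j₁ : ℕ, p = C (T 1) ^ j₀ * (X - C (LaurentPolynomial.C lam)) ^ j₁}) :
    p ∈ lifts (toLaurent : R[X] →+* R[T;T⁻¹]) := by
  suffices h : Submodule.span R _ ≤ Subalgebra.toSubmodule (mapAlgHom toLaurentAlg).range by
    obtain ⟨q, rfl⟩ := h hp
    exact ⟨q, rfl⟩
  rw [Submodule.span_le]
  rintro _ ⟨j₀, j₁, rfl⟩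
  exact ⟨C X ^ j₀ * (X - C (Polynomial.C lam)) ^ j₁, by simp⟩

end Polynomial

end

/-- In the Laurent polynomial ring `ℂ[z₀, z₀⁻¹, z₁]` (modelled as polynomials in `z₁ = X`
over Laurent polynomials in `z₀ = T 1`), the `ℂ`-span `M` of the monomials
`z₀^{j₀}·(z₁ − λ)^{j₁}` contains no nonzero ideal. -/
theorem span_monomials_contains_no_ideal (lam : ℂ) :
    ∀ I : Ideal (Polynomial (LaurentPolynomial ℂ)),
      (I : Set (Polynomial (LaurentPolynomial ℂ))) ⊆
        (Submodule.span ℂ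
          {p : Polynomial (LaurentPolynomial ℂ) |
            ∃ j₀ j₁ : ℕ,
              p = (C (LaurentPolynomial.T 1)) ^ j₀ *
                  (X - C (LaurentPolynomial.C lam)) ^ j₁} :
          Set (Polynomial (LaurentPolynomial ℂ))) →
      I = ⊥ := by
  intro I hI
  refine eq_bot_iff.mpr fun p hp => (Submodule.mem_bot ℂ).mpr ?_
  exact eq_zero_of_forall_C_T_mul_mem_lifts_toLaurent fun n =>
    mem_lifts_toLaurent_of_mem_span_monomials lam (hI (I.mul_mem_left _ hp))
end

section
/- Let d ≥ 1, λ ∈ ℂ, and let V = z₀^d·∂/∂z₁ and W = (z₁−λ)^{d−1}·z₀·∂/∂z₀ be derivations on ℂ[z₀, z₁]. Then for all j₀, j₁ ∈ ℕ₀, the derivation z₀^{j₀}·(z₁−λ)^{j₁}·(z₁−λ)^{d−1}·z₀^{d+1}·∂/∂z₀ lies in the Lie algebra generated (under commutators and ℂ-linear combinations) by the set of derivations { z₀^a · V : a ∈ ℕ₀ } ∪ { (z₁−λ)^b · W : b ∈ ℕ₀ } ∪ { z₀^a (z₁−λ) V : a ∈ ℕ₀ }. -/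
open MvPolynomial

lemma smul_bracket_formula {R A : Type*} [CommRing R] [CommRing A] [Algebra R A]
    (p q : A) (V W : Derivation R A A) :
    ⁅p • V, q • W⁆ = (p * V q) • W - (q * W p) • V + (p * q) • ⁅V, W⁆ := by
  ext a
  simp only [Derivation.commutator_apply, Derivation.smul_apply, Derivation.leibniz,
    Derivation.add_apply, Derivation.sub_apply, smul_eq_mul]
  ring

set_option maxHeartbeats 1000000 in
/-- With `V = z₀^d ∂/∂z₁` and `W = (z₁−λ)^{d−1} z₀ ∂/∂z₀` on `ℂ[z₀,z₁]`, every
derivation `z₀^{j₀}(z₁−λ)^{j₁}·(z₁−λ)^{d−1} z₀^{d+1} ∂/∂z₀` lies in the Lie algebra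
generated by the complete fields `z₀^a V`, `(z₁−λ)^b W` and `z₀^a (z₁−λ) V`. -/
theorem lie_span_contains_module_generators (d : ℕ) (hd : 1 ≤ d) (lam : ℂ)
    (V W : Derivation ℂ (MvPolynomial (Fin 2) ℂ) (MvPolynomial (Fin 2) ℂ))
    (hV : V = (X 0 ^ d : MvPolynomial (Fin 2) ℂ) • pderiv (1 : Fin 2))
    (hW : W = ((X 1 - C lam) ^ (d - 1) * X 0 : MvPolynomial (Fin 2) ℂ) • pderiv (0 : Fin 2)) :
    ∀ j₀ j₁ : ℕ,
      ((X 0 ^ j₀ * (X 1 - C lam) ^ j₁ * (X 1 - C lam) ^ (d - 1) * X 0 ^ (d + 1) :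
          MvPolynomial (Fin 2) ℂ) • pderiv (0 : Fin 2))
        ∈ LieSubalgebra.lieSpan ℂ
            (Derivation ℂ (MvPolynomial (Fin 2) ℂ) (MvPolynomial (Fin 2) ℂ))
            ({D | ∃ a : ℕ, D = (X 0 ^ a : MvPolynomial (Fin 2) ℂ) • V} ∪
             {D | ∃ b : ℕ, D = ((X 1 - C lam) ^ b : MvPolynomial (Fin 2) ℂ) • W} ∪
             {D | ∃ a : ℕ, D = (X 0 ^ a * (X 1 - C lam) : MvPolynomial (Fin 2) ℂ) • V}) := by
  intro j₀ j₁
  set R := MvPolynomial (Fin 2) ℂ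
  set f : R := X 0 ^ j₀
  set g : R := (X 1 - C lam) ^ j₁
  set h : R := X 1 - C lam
  have hVh : V h = X 0 ^ d := by
    simp [hV, h, Derivation.smul_apply]
  have hWh : W h = 0 := by
    simp [hW, h, Derivation.smul_apply]
  have hVgh : V (g * h) = g * V h + h * V g := by
    rw [Derivation.leibniz]; simp [smul_eq_mul]
  have hWfh : W (f * h) = f * W h + h * W f := by
    rw [Derivation.leibniz]; simp [smul_eq_mul]
  have key : ((X 0 ^ j₀ * (X 1 - C lam) ^ j₁ * (X 1 - C lam) ^ (d - 1) * X 0 ^ (d + 1) :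
          MvPolynomial (Fin 2) ℂ) • pderiv (0 : Fin 2))
      = ⁅f • V, ((g * h) : R) • W⁆ - ⁅((f * h) : R) • V, g • W⁆ := by
    rw [smul_bracket_formula, smul_bracket_formula]
    have e1 : (f * V (g * h)) • W - ((g * h) * W f) • V + (f * (g * h)) • ⁅V, W⁆
        - ((f * h * V g) • W - (g * W (f * h)) • V + ((f * h) * g) • ⁅V, W⁆)
        = (f * g * V h) • W + (f * g * W h) • V := by
      rw [hVgh, hWfh]
      module
    rw [e1, hWh, hVh]
    rw [hW]
    rw [smul_smul]
    simp only [mul_zero, zero_smul, add_zero]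
    congr 1
    ring
  rw [key]
  have hmem1 : f • V ∈ LieSubalgebra.lieSpan ℂ _
      ({D | ∃ a : ℕ, D = (X 0 ^ a : R) • V} ∪
       {D | ∃ b : ℕ, D = ((X 1 - C lam) ^ b : R) • W} ∪
       {D | ∃ a : ℕ, D = (X 0 ^ a * (X 1 - C lam) : R) • V}) :=
    LieSubalgebra.subset_lieSpan (Or.inl (Or.inl ⟨j₀, rfl⟩))
  have hmem2 : ((g * h) : R) • W ∈ LieSubalgebra.lieSpan ℂ _
      ({D | ∃ a : ℕ, D = (X 0 ^ a : R) • V} ∪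
       {D | ∃ b : ℕ, D = ((X 1 - C lam) ^ b : R) • W} ∪
       {D | ∃ a : ℕ, D = (X 0 ^ a * (X 1 - C lam) : R) • V}) :=
    LieSubalgebra.subset_lieSpan (Or.inl (Or.inr ⟨j₁ + 1, by rw [pow_succ]⟩))
  have hmem3 : ((f * h) : R) • V ∈ LieSubalgebra.lieSpan ℂ _
      ({D | ∃ a : ℕ, D = (X 0 ^ a : R) • V} ∪
       {D | ∃ b : ℕ, D = ((X 1 - C lam) ^ b : R) • W} ∪
       {D | ∃ a : ℕ, D = (X 0 ^ a * (X 1 - C lam) : R) • V}) :=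
    LieSubalgebra.subset_lieSpan (Or.inr ⟨j₀, rfl⟩)
  have hmem4 : g • W ∈ LieSubalgebra.lieSpan ℂ _
      ({D | ∃ a : ℕ, D = (X 0 ^ a : R) • V} ∪
       {D | ∃ b : ℕ, D = ((X 1 - C lam) ^ b : R) • W} ∪
       {D | ∃ a : ℕ, D = (X 0 ^ a * (X 1 - C lam) : R) • V}) :=
    LieSubalgebra.subset_lieSpan (Or.inl (Or.inr ⟨j₁, rfl⟩))
  exact sub_mem (LieSubalgebra.lie_mem _ hmem1 hmem2) (LieSubalgebra.lie_mem _ hmem3 hmem4)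
end
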